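/- For any vertex-weighted graph (G, w) and any nonempty set S ⊆ E(G), X_{(G,w)} = Σ_{∅ ≠ I ⊆ S} (−1)^{|I|−1} X_{(G−I, w)} + (−1)^{|S|} X_{(G/S, w_{G/S})}. -/

import Mathlib

open SimpleGraph

/-- Proper coloring for an edge set over `Sym2 V` (loops allowed): adjacent (or equal, for a
loop) endpoints must receive different colors. -/
def ProperCol {V : Type*} (E : Set (Sym2 V)) (k : V -> Nat) : Prop :=
  forall u v : V, s(u, v) ∈ E -> k u ≠ k v

/-- Weighted chromatic symmetric function `X_{(G,w)}` as a formal power series in the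
variables `x_0, x_1, …` : the coefficient of a monomial `d` is the number of proper
colorings whose total weight in color `i` is `d i` for every `i`. -/
noncomputable def csfW {V : Type*} (E : Set (Sym2 V)) (w : V -> Nat) : MvPowerSeries Nat Int :=
  fun d => (Nat.card {k : V -> Nat |
    ProperCol E k ∧ forall i : Nat, (∑ᶠ v ∈ {v : V | k v = i}, w v) = d i} : Int)

/-- Chromatic symmetric function `X_G` of a simple graph. -/
noncomputable def csf {V : Type*} (G : SimpleGraph V) : MvPowerSeries Nat Int :=
  csfW G.edgeSet (fun _ => 1)

/-- The setoid identifying the endpoints of the edges in `S` (contraction of `S`). -/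
def cSetoid {V : Type*} (S : Set (Sym2 V)) : Setoid V :=
  Relation.EqvGen.setoid (fun x y => s(x, y) ∈ S)

/-- Vertex set of the contraction `G/S`. -/
def CVert {V : Type*} (S : Set (Sym2 V)) : Type _ := Quotient (cSetoid S)

/-- Quotient map onto the contracted vertex set. -/
def cmk {V : Type*} (S : Set (Sym2 V)) : V -> CVert S := Quotient.mk _

/-- Edge set of the contraction `G/S`: the images of the edges of `E` outside `S`
(edges joining identified vertices become loops). -/
def cEdges {V : Type*} (E S : Set (Sym2 V)) : Set (Sym2 (CVert S)) :=
  (Sym2.map (cmk S)) '' (E \ S)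

/-- The contracted weight function: each merged vertex carries the sum of the weights
of the vertices identified into it. -/
noncomputable def cWeight {V : Type*} (S : Set (Sym2 V)) (w : V -> Nat) : CVert S -> Nat :=
  fun c => ∑ᶠ v ∈ {v : V | cmk S v = c}, w v

/-! Fix a coloring `k`. For `I ⊆ S ⊆ E`, `k` is proper on `E \ I` iff it is proper on `E \ S`
and every edge of `S` that `k` makes monochromatic lies in `I`. Hence the alternating sum of
these indicators over `I ⊆ S` vanishes unless all of `S` is monochromatic, when it is
`(-1)^|S|` times the indicator of properness on `E \ S`. The colorings constant along the edges
of `S` are exactly the pullbacks of colorings of `G/S`, and pulling back preserves the weight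
vector when `G/S` carries the weights `w_{G/S}`. Summing over the colorings of a fixed weight,
a finite set because `w` is positive, gives the identity coefficientwise. -/

open Finset

theorem sum_powerset_filter_superset_neg_one_pow {α : Type*} [DecidableEq α]
    {B S : Finset α} (hBS : B ⊆ S) :
    ∑ I ∈ S.powerset with B ⊆ I, (-1 : ℤ) ^ I.card = if B = S then (-1) ^ S.card else 0 := by
  have hdisj : ∀ J ∈ (S \ B).powerset, Disjoint B J := fun J hJ =>
    disjoint_of_subset_right (mem_powerset.1 hJ) disjoint_sdiff
  have hinj : Set.InjOn (B ∪ ·) ((S \ B).powerset : Set (Finset α)) := fun J hJ J' hJ' h => by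
    rw [← union_sdiff_cancel_left (hdisj J hJ), ← union_sdiff_cancel_left (hdisj J' hJ')]
    exact congrArg (· \ B) h
  have hempty : S \ B = ∅ ↔ B = S := by
    rw [sdiff_eq_empty_iff_subset]
    exact ⟨hBS.antisymm, fun h => h ▸ subset_rfl⟩
  rw [← Icc_eq_filter_powerset, Icc_eq_image_powerset hBS, sum_image hinj,
    sum_congr rfl fun J hJ => by rw [card_union_of_disjoint (hdisj J hJ), pow_add],
    ← mul_sum, sum_powerset_neg_one_pow_card, if_congr hempty rfl rfl]
  split_ifs with h
  · rw [h, mul_one]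
  · rw [mul_zero]

theorem finsum_mem_preimage_eq_finsum_fiber {α β M : Type*} [AddCommMonoid M] [Finite α]
    (f : α → β) (g : α → M) {s : Set β} (hs : s.Finite) :
    ∑ᶠ a ∈ f ⁻¹' s, g a = ∑ᶠ b ∈ s, ∑ᶠ a ∈ f ⁻¹' {b}, g a := by
  rw [← finsum_mem_biUnion (Set.pairwiseDisjoint_fiber f s) hs fun _ _ => Set.toFinite _,
    Set.biUnion_preimage_singleton]

theorem natCard_setOf_and_mem {α : Type*} {s : Set α} (hs : s.Finite) (P : α → Prop)
    [DecidablePred P] : Nat.card {a | P a ∧ a ∈ s} = #{a ∈ hs.toFinset | P a} := by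
  rw [← Nat.card_eq_finsetCard]
  congr
  ext a
  simp [and_comm]

theorem coeff_neg_one_pow_mul {σ : Type*} (d : σ →₀ ℕ) (n : ℕ) (f : MvPowerSeries σ ℤ) :
    MvPowerSeries.coeff d ((-1) ^ n * f) = (-1) ^ n * MvPowerSeries.coeff d f := by
  have hC : (-1 : MvPowerSeries σ ℤ) ^ n = MvPowerSeries.C ((-1) ^ n) := by simp
  rw [hC, MvPowerSeries.coeff_C_mul]

section Colorings

variable {V : Type*}

theorem properCol_iff {E : Set (Sym2 V)} {k : V → ℕ} :
    ProperCol E k ↔ ∀ e ∈ E, ¬ (e.map k).IsDiag := by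
  refine ⟨fun h e he => ?_, fun h u v huv => by simpa using h _ huv⟩
  induction e using Sym2.ind with
  | _ u v => simpa using h u v he

theorem properCol_sdiff_iff {E S I : Set (Sym2 V)} (hS : S ⊆ E) (hI : I ⊆ S) (k : V → ℕ) :
    ProperCol (E \ I) k ↔ ProperCol (E \ S) k ∧ ∀ e ∈ S, (e.map k).IsDiag → e ∈ I := by
  simp only [properCol_iff, Set.mem_sdiff, and_imp]
  constructor
  · intro h
    exact ⟨fun e he heS => h e he fun heI => heS (hI heI),
      fun e heS hd => by_contra fun heI => h e (hS heS) heI hd⟩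
  · rintro ⟨hES, hSI⟩ e he heI hd
    by_cases heS : e ∈ S
    · exact heI (hSI e heS hd)
    · exact hES e he heS hd

open Classical in
theorem sum_powerset_neg_one_pow_properCol {E : Set (Sym2 V)} {S : Finset (Sym2 V)}
    (hS : (S : Set (Sym2 V)) ⊆ E) (k : V → ℕ) :
    ∑ I ∈ S.powerset, (if ProperCol (E \ ↑I) k then (-1 : ℤ) ^ I.card else 0)
      = if ProperCol (E \ ↑S) k ∧ ∀ e ∈ S, (e.map k).IsDiag then (-1) ^ S.card else 0 := by
  set B := S.filter fun e => (e.map k).IsDiag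
  have hB : ∀ I ∈ S.powerset, ProperCol (E \ ↑I) k ↔ ProperCol (E \ ↑S) k ∧ B ⊆ I :=
    fun I hI => by
      rw [properCol_sdiff_iff hS (coe_subset.2 (mem_powerset.1 hI))]
      simp [B, subset_iff]
  rw [sum_congr rfl fun I hI => if_congr (hB I hI) rfl rfl]
  by_cases hES : ProperCol (E \ ↑S) k
  · simp only [hES, true_and]
    rw [← sum_filter, sum_powerset_filter_superset_neg_one_pow (filter_subset _ _)]
    exact if_congr filter_eq_self rfl rfl
  · simp [hES]

def weightClass (w : V → ℕ) (d : ℕ →₀ ℕ) : Set (V → ℕ) :=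
  {k | ∀ i, (∑ᶠ v ∈ {v | k v = i}, w v) = d i}

theorem finite_weightClass [Finite V] {w : V → ℕ} (hw : ∀ v, 0 < w v) (d : ℕ →₀ ℕ) :
    (weightClass w d).Finite := by
  refine (Set.Finite.pi fun _ : V => d.support.finite_toSet).subset fun k hk => ?_
  simp only [Set.mem_pi, Set.mem_univ, mem_coe, Finsupp.mem_support_iff, forall_const]
  intro v
  have hsplit := finsum_mem_add_sdiff (f := w)
    (Set.singleton_subset_iff.2 (show v ∈ {u | k u = k v} from rfl)) (Set.toFinite _)
  rw [finsum_mem_singleton, hk (k v)] at hsplit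
  have := hw v
  omega

open Classical in
theorem coeff_csfW_eq_sum {w : V → ℕ} {d : ℕ →₀ ℕ} (hfin : (weightClass w d).Finite)
    (E : Set (Sym2 V)) :
    MvPowerSeries.coeff d (csfW E w) = ∑ k ∈ hfin.toFinset, if ProperCol E k then 1 else 0 := by
  rw [sum_boole, ← natCard_setOf_and_mem hfin]
  rfl

instance [Finite V] (S : Set (Sym2 V)) : Finite (CVert S) := Quotient.finite _

theorem cmk_surjective (S : Set (Sym2 V)) : Function.Surjective (cmk S) :=
  Quotient.mk_surjective

theorem exists_comp_cmk_eq_iff {S : Set (Sym2 V)} {k : V → ℕ} :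
    (∃ k' : CVert S → ℕ, k' ∘ cmk S = k) ↔ ∀ e ∈ S, (e.map k).IsDiag := by
  constructor
  · rintro ⟨k', rfl⟩ e he
    induction e using Sym2.ind with
    | _ u v =>
      simp only [Sym2.map_mk, Sym2.mk_isDiag_iff, Function.comp_apply]
      exact congrArg k' (Quotient.sound (Relation.EqvGen.rel u v he))
  · intro h
    have hker : cSetoid S ≤ Setoid.ker k :=
      Setoid.eqvGen_le fun u v huv => by simpa using h _ huv
    exact ⟨Quotient.lift k fun _ _ huv => hker huv, rfl⟩

theorem properCol_cEdges_iff {E S : Set (Sym2 V)} {k' : CVert S → ℕ} :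
    ProperCol (cEdges E S) k' ↔ ProperCol (E \ S) (k' ∘ cmk S) := by
  simp only [properCol_iff, cEdges, Set.forall_mem_image, Sym2.map_map]

theorem comp_cmk_mem_weightClass_iff [Finite V] {S : Set (Sym2 V)} {w : V → ℕ}
    {d : ℕ →₀ ℕ} {k' : CVert S → ℕ} :
    k' ∘ cmk S ∈ weightClass w d ↔ k' ∈ weightClass (cWeight S w) d := by
  have hfiber : ∀ i, ∑ᶠ v ∈ {v | k' (cmk S v) = i}, w v
      = ∑ᶠ c ∈ {c | k' c = i}, cWeight S w c :=
    fun i => finsum_mem_preimage_eq_finsum_fiber (cmk S) w (s := {c | k' c = i}) (Set.toFinite _)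
  exact forall_congr' fun i => iff_of_eq (congrArg (· = d i) (hfiber i))

theorem coeff_csfW_cEdges [Finite V] (E S : Set (Sym2 V)) (w : V → ℕ) (d : ℕ →₀ ℕ) :
    MvPowerSeries.coeff d (csfW (cEdges E S) (cWeight S w))
      = Nat.card {k : V → ℕ |
          (ProperCol (E \ S) k ∧ ∀ e ∈ S, (e.map k).IsDiag) ∧ k ∈ weightClass w d} := by
  have himage : {k : V → ℕ |
        (ProperCol (E \ S) k ∧ ∀ e ∈ S, (e.map k).IsDiag) ∧ k ∈ weightClass w d}
      = (· ∘ cmk S) '' {k' | ProperCol (cEdges E S) k' ∧ k' ∈ weightClass (cWeight S w) d} := by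
    ext k
    simp only [Set.mem_ofPred_eq, Set.mem_image, ← exists_comp_cmk_eq_iff]
    constructor
    · rintro ⟨⟨hP, k', rfl⟩, hW⟩
      exact ⟨k', ⟨properCol_cEdges_iff.2 hP, comp_cmk_mem_weightClass_iff.1 hW⟩, rfl⟩
    · rintro ⟨k', ⟨hP, hW⟩, rfl⟩
      exact ⟨⟨properCol_cEdges_iff.1 hP, k', rfl⟩, comp_cmk_mem_weightClass_iff.2 hW⟩
  rw [himage, Nat.card_image_of_injective (cmk_surjective S).injective_comp_right]
  rfl

theorem sum_powerset_neg_one_pow_mul_csfW_sdiff [Finite V] (E : Set (Sym2 V)) {w : V → ℕ}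
    (hw : ∀ v, 0 < w v) {S : Finset (Sym2 V)} (hS : (S : Set (Sym2 V)) ⊆ E) :
    ∑ I ∈ S.powerset, (-1 : MvPowerSeries ℕ ℤ) ^ I.card * csfW (E \ ↑I) w
      = (-1) ^ S.card * csfW (cEdges E ↑S) (cWeight ↑S w) := by
  classical
  ext d
  have hfin := finite_weightClass hw d
  rw [map_sum, coeff_neg_one_pow_mul, coeff_csfW_cEdges, natCard_setOf_and_mem hfin,
    ← sum_boole]
  calc ∑ I ∈ S.powerset, MvPowerSeries.coeff d ((-1) ^ I.card * csfW (E \ ↑I) w)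
      = ∑ k ∈ hfin.toFinset, ∑ I ∈ S.powerset,
          if ProperCol (E \ ↑I) k then (-1 : ℤ) ^ I.card else 0 := by
        simp only [coeff_neg_one_pow_mul, coeff_csfW_eq_sum hfin, mul_sum, mul_boole]
        exact sum_comm
    _ = ∑ k ∈ hfin.toFinset,
          if ProperCol (E \ ↑S) k ∧ ∀ e ∈ S, (e.map k).IsDiag then (-1) ^ S.card else 0 :=
        sum_congr rfl fun k _ => sum_powerset_neg_one_pow_properCol hS k
    _ = _ := by simp only [mul_sum, mul_boole, mem_coe]

end Colorings

open scoped Classical in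
theorem stmt7_general {V : Type*} [Finite V] (E : Set (Sym2 V)) (w : V → Nat)
    (hw : ∀ v, 0 < w v) (S : Finset (Sym2 V)) (hS : (S : Set (Sym2 V)) ⊆ E) :
    csfW E w =
      (∑ I ∈ S.powerset.erase ∅,
        (-1 : MvPowerSeries Nat Int) ^ (I.card - 1) * csfW (E \ (I : Set (Sym2 V))) w)
      + (-1 : MvPowerSeries Nat Int) ^ S.card *
          csfW (cEdges E (S : Set (Sym2 V))) (cWeight (S : Set (Sym2 V)) w) := by
  have hsign : ∀ I ∈ S.powerset.erase ∅,
      (-1 : MvPowerSeries ℕ ℤ) ^ (I.card - 1) * csfW (E \ ↑I) w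
        = -((-1) ^ I.card * csfW (E \ ↑I) w) := fun I hI => by
    obtain ⟨n, hn⟩ := Nat.exists_eq_add_one_of_ne_zero (card_ne_zero.2 <|
      nonempty_iff_ne_empty.2 (ne_of_mem_erase hI))
    rw [hn, Nat.add_sub_cancel, pow_succ]
    ring
  rw [sum_congr rfl hsign, sum_neg_distrib, ← sum_powerset_neg_one_pow_mul_csfW_sdiff E hw hS,
    ← add_sum_erase _ _ (empty_mem_powerset S)]
  simp

open scoped Classical in
/-- for any nonempty `S ⊆ E(G)`,
`X_{(G,w)} = Σ_{∅ ≠ I ⊆ S} (-1)^(|I|-1) X_{(G-I,w)} + (-1)^(|S|) X_{(G/S, w_{G/S})}`. -/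
theorem stmt7 {V : Type*} [Finite V] (E : Set (Sym2 V)) (w : V → Nat)
    (hw : ∀ v, 0 < w v) (S : Finset (Sym2 V)) (hS : (S : Set (Sym2 V)) ⊆ E)
    (hSne : S.Nonempty) :
    csfW E w =
      (∑ I ∈ S.powerset.erase ∅,
        (-1 : MvPowerSeries Nat Int) ^ (I.card - 1) * csfW (E \ (I : Set (Sym2 V))) w)
      + (-1 : MvPowerSeries Nat Int) ^ S.card *
          csfW (cEdges E (S : Set (Sym2 V))) (cWeight (S : Set (Sym2 V)) w) :=
  stmt7_general E w hw S hS
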